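/- arXiv:2107.11321 — 3 statements merged into one kernel-verified Lean document; each statement's English description precedes it below -/
import Mathlib

section
/- Let W ∈ ℝ^{N×N} be a mixing matrix with ρ := ‖W − (1/N)eeᵀ‖₂ satisfying 0 < ρ < 1. Define μ₀ := 1, μ₁ := 1/ρ, and μ_{r+1} := (2/ρ)μ_r − μ_{r-1} for r ≥ 1. Given A⁰ ∈ ℝ^{N×p}, set A¹ := W A⁰ and A^{r+1} := (2μ_r/(ρ μ_{r+1})) W A^r − (μ_{r-1}/μ_{r+1}) A^{r-1} for r ≥ 1. Then for every integer R ≥ 1: (a) there is a real polynomial P of degree at most R with P(1) = 1 such that A^R = P(W) A⁰; in particular P(W) is symmetric and P(W)e = e; (b) the row average is preserved: (1/N)eeᵀA^R = (1/N)eeᵀA⁰ =: Ā; and (c) ‖A^R − Ā‖_F ≤ 2(1 − √(1−ρ))^R ‖A⁰ − Ā‖_F. -/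
/-! With `μ_r = T_r(1/ρ)` (Chebyshev polynomials of the first kind), the two recursions combine
into `μ_r A^r = T_r(W/ρ) A⁰`, so `P = T_R(X/ρ) / T_R(1/ρ)`. Since `We = e` and `W` is symmetric,
`P(W)` fixes the averaging projection `J = eeᵀ/N`, and `A^R − Ā = P(W − J)(A⁰ − Ā)`. The symmetric
matrix `W − J` has its eigenvalues in `[−ρ, ρ]`, where `|T_R(t/ρ)| ≤ 1`; writing
`1/ρ = (y + 1/y)/2` gives `T_R(1/ρ) ≥ y^R/2` with `1/y ≤ 1 − √(1−ρ)`. -/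

open Matrix Finset

attribute [local instance] Matrix.frobeniusNormedAddCommGroup Matrix.frobeniusNormedSpace

noncomputable section

variable {N p : ℕ}

/-- Frobenius inner product on `N × p` real matrices. -/
def frobInner (A B : Matrix (Fin N) (Fin p) ℝ) : ℝ := ∑ i, ∑ j, A i j * B i j

/-- Squared Frobenius norm. -/
def frobSq (A : Matrix (Fin N) (Fin p) ℝ) : ℝ := frobInner A A

/-- Frobenius norm. -/
def frobNorm (A : Matrix (Fin N) (Fin p) ℝ) : ℝ := Real.sqrt (frobInner A A)

/-- The continuous linear functional `H ↦ ⟨G, H⟩_F`. -/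
def frobCLM (G : Matrix (Fin N) (Fin p) ℝ) : Matrix (Fin N) (Fin p) ℝ →L[ℝ] ℝ :=
  LinearMap.toContinuousLinearMap
    { toFun := fun H => frobInner G H
      map_add' := by
        intro x y
        simp [frobInner, Matrix.add_apply, mul_add, Finset.sum_add_distrib]
      map_smul' := by
        intro c x
        simp [frobInner, Matrix.smul_apply, Finset.mul_sum]
        ring_nf
        apply Finset.sum_congr rfl; intro i _
        apply Finset.sum_congr rfl; intro j _; ring }

/-- Spectral norm (operator 2-norm) of a square real matrix. -/
def specNorm {N : ℕ} (M : Matrix (Fin N) (Fin N) ℝ) : ℝ :=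
  ‖Matrix.toEuclideanCLM (𝕜 := ℝ) M‖

/-- The all-ones `N × N` matrix. -/
def onesMat (N : ℕ) : Matrix (Fin N) (Fin N) ℝ := fun _ _ => 1

/-- Quadratic form `‖A‖_M² := ⟨A, M A⟩_F` for a symmetric `M` (possibly negative). -/
def quadForm (M : Matrix (Fin N) (Fin N) ℝ) (A : Matrix (Fin N) (Fin p) ℝ) : ℝ :=
  frobInner A (M * A)

/-- Augmented Lagrangian `L_η(X, X0; Y, Z)`, where `S` plays the role of `√(I−W)`. -/
def Lag (F : Matrix (Fin N) (Fin p) ℝ → ℝ) (S : Matrix (Fin N) (Fin N) ℝ) (η : ℝ)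
    (X X0 Y Z : Matrix (Fin N) (Fin p) ℝ) : ℝ :=
  F X + frobInner Y (X - X0) + (2*η)⁻¹ * frobSq (X - X0)
    + frobInner Z (S * X0) + (2*η)⁻¹ * frobSq (S * X0)

open Polynomial

section AevalOfEigen

variable {R S : Type*} [CommRing R] [Ring S] [Algebra R S]

theorem mul_aeval_eq_eval_smul {a e : S} {c : R} (h : e * a = c • e) (q : R[X]) :
    e * aeval a q = q.eval c • e := by
  have hpow (k : ℕ) : e * a ^ k = c ^ k • e := by
    induction k with
    | zero => simp
    | succ k ih => rw [pow_succ, ← mul_assoc, ih, smul_mul_assoc, h, smul_smul, pow_succ]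
  simp only [aeval_eq_sum_range, eval_eq_sum_range, Finset.mul_sum, mul_smul_comm, hpow,
    smul_smul, Finset.sum_smul]

theorem aeval_mul_eq_eval_smul {a e : S} {c : R} (h : a * e = c • e) (q : R[X]) :
    aeval a q * e = q.eval c • e := by
  have hpow (k : ℕ) : a ^ k * e = c ^ k • e := by
    induction k with
    | zero => simp
    | succ k ih => rw [pow_succ', mul_assoc, ih, mul_smul_comm, h, smul_smul, ← pow_succ]
  simp only [aeval_eq_sum_range, eval_eq_sum_range, Finset.sum_mul, smul_mul_assoc, hpow,
    smul_smul, Finset.sum_smul]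

/-- `a - j = a (1 - j)` with `a` commuting with the idempotent `1 - j`. -/
theorem aeval_sub_mul_one_sub {a j : S} (hj : IsIdempotentElem j) (hja : j * a = j)
    (haj : a * j = j) (q : R[X]) : aeval (a - j) q * (1 - j) = aeval a q * (1 - j) := by
  have hcomm : Commute a (1 - j) := by
    simp only [Commute, SemiconjBy, mul_sub, sub_mul, mul_one, one_mul, hja, haj]
  have hpow (k : ℕ) : (a - j) ^ k * (1 - j) = a ^ k * (1 - j) := by
    rw [show a - j = a * (1 - j) by rw [mul_sub, mul_one, haj], hcomm.mul_pow, mul_assoc,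
      ← pow_succ, hj.one_sub.pow_succ_eq]
  simp only [aeval_eq_sum_range, Finset.sum_mul, smul_mul_assoc, hpow]

end AevalOfEigen

namespace Matrix

variable {n R : Type*} [Fintype n] [DecidableEq n] [CommRing R]

theorem aeval_mulVec_eq_eval_smul {W : Matrix n n R} {v : n → R} {c : R} (h : W *ᵥ v = c • v)
    (q : R[X]) : aeval W q *ᵥ v = q.eval c • v := by
  have hpow (k : ℕ) : W ^ k *ᵥ v = c ^ k • v := by
    induction k with
    | zero => simp
    | succ k ih => rw [pow_succ', ← mulVec_mulVec, ih, mulVec_smul, h, smul_smul, ← pow_succ]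
  simp only [aeval_eq_sum_range, eval_eq_sum_range, sum_mulVec, smul_mulVec, hpow, smul_smul,
    Finset.sum_smul]

theorem transpose_aeval (W : Matrix n n R) (q : R[X]) : (aeval W q)ᵀ = aeval Wᵀ q := by
  simp only [aeval_eq_sum_range, transpose_sum, transpose_smul, transpose_pow]

end Matrix

section ChebyshevBounds

theorem T_real_eval_half_add_inv {y : ℝ} (hy : 0 < y) (n : ℕ) :
    (Chebyshev.T ℝ n).eval ((y + y⁻¹) / 2) = (y ^ n + y⁻¹ ^ n) / 2 := by
  rw [← Real.cosh_log hy, Chebyshev.T_real_cosh, Real.cosh_eq, ← mul_neg, ← Real.log_inv]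
  push_cast
  rw [Real.exp_nat_mul, Real.exp_nat_mul, Real.exp_log hy, Real.exp_log (inv_pos.2 hy)]

variable {ρ : ℝ}

theorem T_real_eval_inv_eq (h0 : 0 < ρ) (h1 : ρ ≤ 1) (n : ℕ) :
    (Chebyshev.T ℝ n).eval ρ⁻¹
      = (((1 + √(1 - ρ ^ 2)) / ρ) ^ n + ((1 + √(1 - ρ ^ 2)) / ρ)⁻¹ ^ n) / 2 := by
  have hs : √(1 - ρ ^ 2) ^ 2 = 1 - ρ ^ 2 := Real.sq_sqrt (by nlinarith)
  rw [← T_real_eval_half_add_inv (by positivity)]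
  congr 1
  field_simp
  linear_combination -hs

theorem T_real_eval_inv_pos (h0 : 0 < ρ) (h1 : ρ ≤ 1) (n : ℕ) :
    0 < (Chebyshev.T ℝ n).eval ρ⁻¹ := by
  rw [T_real_eval_inv_eq h0 h1]
  positivity

theorem inv_le_one_sub_sqrt (h0 : 0 < ρ) (h1 : ρ ≤ 1) :
    ((1 + √(1 - ρ ^ 2)) / ρ)⁻¹ ≤ 1 - √(1 - ρ) := by
  have hu : √(1 - ρ) ^ 2 = 1 - ρ := Real.sq_sqrt (by linarith)
  have hus : √(1 - ρ) ≤ √(1 - ρ ^ 2) := Real.sqrt_le_sqrt (by nlinarith)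
  have hu1 : √(1 - ρ) ≤ 1 := Real.sqrt_le_one.2 (by linarith)
  rw [inv_div, div_le_iff₀ (by positivity)]
  nlinarith [Real.sqrt_nonneg (1 - ρ)]

theorem inv_T_real_eval_inv_le (h0 : 0 < ρ) (h1 : ρ ≤ 1) (n : ℕ) :
    ((Chebyshev.T ℝ n).eval ρ⁻¹)⁻¹ ≤ 2 * (1 - √(1 - ρ)) ^ n := by
  set y := (1 + √(1 - ρ ^ 2)) / ρ
  have hy : 0 < y := by positivity
  have hT : y ^ n / 2 ≤ (Chebyshev.T ℝ n).eval ρ⁻¹ := by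
    rw [T_real_eval_inv_eq h0 h1]
    linarith [pow_pos (inv_pos.2 hy) n]
  calc ((Chebyshev.T ℝ n).eval ρ⁻¹)⁻¹ ≤ (y ^ n / 2)⁻¹ := inv_anti₀ (by positivity) hT
    _ = 2 * y⁻¹ ^ n := by rw [inv_div, inv_pow, div_eq_mul_inv]
    _ ≤ 2 * (1 - √(1 - ρ)) ^ n := by
      gcongr
      exact inv_le_one_sub_sqrt h0 h1

end ChebyshevBounds

section NormalizedChebyshev

def normalizedChebyshev (ρ : ℝ) (n : ℕ) : ℝ[X] :=
  C ((Chebyshev.T ℝ n).eval ρ⁻¹)⁻¹ * (Chebyshev.T ℝ n).comp (C ρ⁻¹ * X)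

theorem natDegree_normalizedChebyshev_le (ρ : ℝ) (n : ℕ) :
    (normalizedChebyshev ρ n).natDegree ≤ n :=
  calc (normalizedChebyshev ρ n).natDegree
      ≤ (Chebyshev.T ℝ n).natDegree * (C ρ⁻¹ * X).natDegree :=
        (natDegree_C_mul_le _ _).trans natDegree_comp_le
    _ ≤ n * 1 := by
        gcongr
        · simp [Chebyshev.natDegree_T]
        · exact (natDegree_C_mul_le _ _).trans natDegree_X_le
    _ = n := mul_one n

theorem aeval_normalizedChebyshev {S : Type*} [Ring S] [Algebra ℝ S] (ρ : ℝ) (n : ℕ) (a : S) :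
    aeval a (normalizedChebyshev ρ n)
      = ((Chebyshev.T ℝ n).eval ρ⁻¹)⁻¹ • aeval (ρ⁻¹ • a) (Chebyshev.T ℝ n) := by
  simp only [normalizedChebyshev, map_mul, aeval_C, aeval_comp, aeval_X, ← Algebra.smul_def]

variable {ρ : ℝ}

theorem eval_one_normalizedChebyshev (h0 : 0 < ρ) (h1 : ρ ≤ 1) (n : ℕ) :
    (normalizedChebyshev ρ n).eval 1 = 1 := by
  simp only [normalizedChebyshev, eval_mul, eval_C, eval_comp, eval_X, mul_one]
  exact inv_mul_cancel₀ (T_real_eval_inv_pos h0 h1 n).ne'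

theorem abs_eval_normalizedChebyshev_le (h0 : 0 < ρ) (h1 : ρ ≤ 1) {t : ℝ} (ht : |t| ≤ ρ)
    (n : ℕ) : |(normalizedChebyshev ρ n).eval t| ≤ 2 * (1 - √(1 - ρ)) ^ n := by
  have hT : |(Chebyshev.T ℝ n).eval (ρ⁻¹ * t)| ≤ 1 := by
    refine Chebyshev.abs_eval_T_real_le_one n ?_
    rw [abs_mul, abs_inv, abs_of_pos h0]
    exact inv_mul_le_one_of_le₀ ht h0.le
  simp only [normalizedChebyshev, eval_mul, eval_C, eval_comp, eval_X, abs_mul,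
    abs_of_pos (inv_pos.2 (T_real_eval_inv_pos h0 h1 n))]
  calc ((Chebyshev.T ℝ n).eval ρ⁻¹)⁻¹ * |(Chebyshev.T ℝ n).eval (ρ⁻¹ * t)|
      ≤ ((Chebyshev.T ℝ n).eval ρ⁻¹)⁻¹ :=
        mul_le_of_le_one_right (inv_pos.2 (T_real_eval_inv_pos h0 h1 n)).le hT
    _ ≤ 2 * (1 - √(1 - ρ)) ^ n := inv_T_real_eval_inv_le h0 h1 n

end NormalizedChebyshev

section ChebyshevIteration

variable {n m : Type*} [Fintype n] [DecidableEq n] {ρ : ℝ} {μ : ℕ → ℝ}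
  {W : Matrix n n ℝ} {A : ℕ → Matrix n m ℝ}

theorem chebyshev_weights_eq (hμ0 : μ 0 = 1) (hμ1 : μ 1 = 1 / ρ)
    (hμrec : ∀ r : ℕ, μ (r + 2) = (2 / ρ) * μ (r + 1) - μ r) (r : ℕ) :
    μ r = (Chebyshev.T ℝ r).eval ρ⁻¹ := by
  induction r using Nat.twoStepInduction with
  | zero => simp [hμ0]
  | one => simp [hμ1]
  | more r ih0 ih1 =>
    rw [hμrec, ih0, ih1]
    push_cast
    rw [Chebyshev.T_add_two]
    simp only [eval_sub, eval_mul, eval_ofNat, eval_X]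
    ring

theorem chebyshev_weight_smul_iterate_eq (hμ : ∀ r, μ r ≠ 0) (hμ0 : μ 0 = 1)
    (hμ1 : μ 1 = 1 / ρ) (hA1 : A 1 = W * A 0)
    (hArec : ∀ r : ℕ, A (r + 2)
        = (2 * μ (r + 1) / (ρ * μ (r + 2))) • (W * A (r + 1)) - (μ r / μ (r + 2)) • A r)
    (r : ℕ) : μ r • A r = aeval (ρ⁻¹ • W) (Chebyshev.T ℝ r) * A 0 := by
  induction r using Nat.twoStepInduction with
  | zero => simp [hμ0]
  | one => simp [hμ1, hA1, Matrix.smul_mul]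
  | more r ih0 ih1 =>
    have hstep : μ (r + 2) • A (r + 2)
        = (2 : ℝ) • ((ρ⁻¹ • W) * (μ (r + 1) • A (r + 1))) - μ r • A r := by
      rw [hArec, smul_sub, smul_smul, smul_smul, Matrix.smul_mul, Matrix.mul_smul, smul_smul,
        smul_smul]
      congr 2 <;> field_simp [hμ (r + 2)]
    rw [hstep, ih0, ih1]
    push_cast
    rw [Chebyshev.T_add_two, two_mul, two_smul]
    simp only [map_sub, map_mul, map_add, aeval_X, Matrix.sub_mul, Matrix.add_mul,
      Matrix.mul_assoc]

theorem chebyshev_iterate_eq_aeval (h0 : 0 < ρ) (h1 : ρ ≤ 1) (hμ0 : μ 0 = 1)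
    (hμ1 : μ 1 = 1 / ρ) (hμrec : ∀ r : ℕ, μ (r + 2) = (2 / ρ) * μ (r + 1) - μ r)
    (hA1 : A 1 = W * A 0)
    (hArec : ∀ r : ℕ, A (r + 2)
        = (2 * μ (r + 1) / (ρ * μ (r + 2))) • (W * A (r + 1)) - (μ r / μ (r + 2)) • A r)
    (r : ℕ) : A r = aeval W (normalizedChebyshev ρ r) * A 0 := by
  have hμ := chebyshev_weights_eq hμ0 hμ1 hμrec
  have hμ_ne (r : ℕ) : μ r ≠ 0 := hμ r ▸ (T_real_eval_inv_pos h0 h1 r).ne'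
  rw [aeval_normalizedChebyshev, Matrix.smul_mul,
    ← chebyshev_weight_smul_iterate_eq hμ_ne hμ0 hμ1 hA1 hArec, ← hμ,
    inv_smul_smul₀ (hμ_ne r)]

end ChebyshevIteration

theorem frobInner_eq_trace (A B : Matrix (Fin N) (Fin p) ℝ) :
    frobInner A B = (Aᴴ * B).trace := by
  simp only [frobInner, Matrix.trace, Matrix.diag, Matrix.mul_apply, Matrix.conjTranspose_apply,
    star_trivial]
  exact Finset.sum_comm

theorem frobSq_unitary_mul (U : unitary (Matrix (Fin N) (Fin N) ℝ))
    (B : Matrix (Fin N) (Fin p) ℝ) : frobSq ((U : Matrix (Fin N) (Fin N) ℝ) * B) = frobSq B := by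
  rw [frobSq, frobSq, frobInner_eq_trace, frobInner_eq_trace, Matrix.conjTranspose_mul,
    Matrix.mul_assoc, ← Matrix.mul_assoc _ _ B, ← Matrix.star_eq_conjTranspose,
    Unitary.coe_star_mul_self, Matrix.one_mul]

theorem frobSq_diagonal_mul_le {d : Fin N → ℝ} {c : ℝ} (hd : ∀ i, |d i| ≤ c)
    (B : Matrix (Fin N) (Fin p) ℝ) : frobSq (Matrix.diagonal d * B) ≤ c ^ 2 * frobSq B := by
  simp only [frobSq, frobInner, Matrix.diagonal_mul, Finset.mul_sum]
  refine Finset.sum_le_sum fun i _ => Finset.sum_le_sum fun j _ => ?_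
  have : d i ^ 2 ≤ c ^ 2 := sq_le_sq.2 ((hd i).trans (le_abs_self c))
  nlinarith [mul_self_nonneg (B i j)]

theorem abs_eigenvalues_le_specNorm {M : Matrix (Fin N) (Fin N) ℝ} (hM : M.IsHermitian)
    (i : Fin N) : |hM.eigenvalues i| ≤ specNorm M := by
  have hmem : hM.eigenvalues i ∈ spectrum ℝ (Matrix.toEuclideanCLM (𝕜 := ℝ) M) := by
    rw [AlgEquiv.spectrum_eq]
    exact hM.eigenvalues_mem_spectrum_real i
  calc |hM.eigenvalues i| = ‖hM.eigenvalues i‖ := (Real.norm_eq_abs _).symm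
    _ ≤ specNorm M * ‖(1 : EuclideanSpace ℝ (Fin N) →L[ℝ] EuclideanSpace ℝ (Fin N))‖ :=
      spectrum.norm_le_norm_mul_of_mem hmem
    _ ≤ specNorm M := mul_le_of_le_one_right (norm_nonneg _) ContinuousLinearMap.norm_id_le

theorem frobNorm_aeval_mul_le {M : Matrix (Fin N) (Fin N) ℝ} (hM : M.IsHermitian) {q : ℝ[X]}
    {c : ℝ} (hc0 : 0 ≤ c) (hc : ∀ i, |q.eval (hM.eigenvalues i)| ≤ c)
    (B : Matrix (Fin N) (Fin p) ℝ) : frobNorm (aeval M q * B) ≤ c * frobNorm B := by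
  let U := hM.eigenvectorUnitary
  have hdiag : aeval M q * B = (U : Matrix (Fin N) (Fin N) ℝ) *
      (Matrix.diagonal (q.eval ∘ hM.eigenvalues) * ((star U : Matrix (Fin N) (Fin N) ℝ) * B)) := by
    rw [← cfc_polynomial q M hM.isSelfAdjoint, hM.cfc_eq, Matrix.IsHermitian.cfc,
      Unitary.conjStarAlgAut_apply]
    simp [U, Matrix.mul_assoc]
  have hsq : frobSq (aeval M q * B) ≤ c ^ 2 * frobSq B := by
    rw [hdiag, frobSq_unitary_mul, ← frobSq_unitary_mul (star U) B, Unitary.coe_star]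
    exact frobSq_diagonal_mul_le hc _
  calc frobNorm (aeval M q * B) = √(frobSq (aeval M q * B)) := rfl
    _ ≤ √(c ^ 2 * frobSq B) := Real.sqrt_le_sqrt hsq
    _ = c * frobNorm B := by rw [Real.sqrt_mul (sq_nonneg c), Real.sqrt_sq hc0]; rfl

def avgMat (N : ℕ) : Matrix (Fin N) (Fin N) ℝ := (N : ℝ)⁻¹ • onesMat N

theorem avgMat_mul (B : Matrix (Fin N) (Fin p) ℝ) :
    avgMat N * B = (N : ℝ)⁻¹ • (onesMat N * B) :=
  Matrix.smul_mul _ _ _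

theorem transpose_avgMat : (avgMat N)ᵀ = avgMat N := by
  rw [avgMat, Matrix.transpose_smul]
  rfl

theorem isIdempotentElem_avgMat : IsIdempotentElem (avgMat N) := by
  have hones : onesMat N * onesMat N = (N : ℝ) • onesMat N := by
    ext i j
    simp [Matrix.mul_apply, onesMat]
  have hN : (N : ℝ)⁻¹ * (N : ℝ)⁻¹ * N = (N : ℝ)⁻¹ := by
    simpa using mul_self_mul_inv (N : ℝ)⁻¹
  rw [IsIdempotentElem, avgMat, Matrix.smul_mul, Matrix.mul_smul, hones, smul_smul, smul_smul, hN]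

theorem mul_avgMat_of_mulVec_one {W : Matrix (Fin N) (Fin N) ℝ}
    (hW : W *ᵥ (fun _ => (1 : ℝ)) = fun _ => 1) : W * avgMat N = avgMat N := by
  have hones : W * onesMat N = onesMat N := by
    ext i j
    simpa [Matrix.mul_apply, onesMat, Matrix.mulVec, dotProduct] using congrFun hW i
  rw [avgMat, Matrix.mul_smul, hones]

theorem avgMat_mul_of_mulVec_one {W : Matrix (Fin N) (Fin N) ℝ} (hsym : Wᵀ = W)
    (hW : W *ᵥ (fun _ => (1 : ℝ)) = fun _ => 1) : avgMat N * W = avgMat N := by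
  rw [← Matrix.transpose_inj, Matrix.transpose_mul, hsym, transpose_avgMat,
    mul_avgMat_of_mulVec_one hW]

theorem aeval_mul_sub_avgMat_mul {W : Matrix (Fin N) (Fin N) ℝ} (hWJ : W * avgMat N = avgMat N)
    (hJW : avgMat N * W = avgMat N) {q : ℝ[X]} (hq : q.eval 1 = 1)
    (B : Matrix (Fin N) (Fin p) ℝ) :
    aeval W q * B - avgMat N * B = aeval (W - avgMat N) q * (B - avgMat N * B) :=
  calc aeval W q * B - avgMat N * B = aeval W q * (1 - avgMat N) * B := by
        rw [Matrix.mul_sub, Matrix.mul_one,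
          aeval_mul_eq_eval_smul (hWJ.trans (one_smul ℝ _).symm), hq, one_smul, Matrix.sub_mul]
    _ = aeval (W - avgMat N) q * (B - avgMat N * B) := by
        rw [← aeval_sub_mul_one_sub isIdempotentElem_avgMat hJW hWJ, Matrix.mul_assoc,
          Matrix.sub_mul, Matrix.one_mul]

theorem chebyshev_acceleration_general (N p : ℕ)
    -- mixing matrix assumptions
    (W : Matrix (Fin N) (Fin N) ℝ) (hWsym : Wᵀ = W)
    (hWnull : ∀ v : Fin N → ℝ, (1 - W).mulVec v = 0 ↔ ∃ c : ℝ, v = fun _ => c)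
    (ρ : ℝ) (hρdef : ρ = specNorm (W - (N:ℝ)⁻¹ • onesMat N)) (hρlt : ρ < 1)
    (hρpos : 0 < ρ)
    -- Chebyshev step-size recursion
    (μ : ℕ → ℝ) (hμ0 : μ 0 = 1) (hμ1 : μ 1 = 1/ρ)
    (hμrec : ∀ r : ℕ, μ (r+2) = (2/ρ) * μ (r+1) - μ r)
    -- Chebyshev iterates
    (A : ℕ → Matrix (Fin N) (Fin p) ℝ)
    (hA1 : A 1 = W * A 0)
    (hArec : ∀ r : ℕ, A (r+2)
        = (2 * μ (r+1) / (ρ * μ (r+2))) • (W * A (r+1)) - (μ r / μ (r+2)) • A r) :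
    ∀ R : ℕ, 1 ≤ R →
      (∃ P : Polynomial ℝ, P.natDegree ≤ R ∧ P.eval (1:ℝ) = 1 ∧
          A R = (Polynomial.aeval W P) * A 0 ∧
          (Polynomial.aeval W P)ᵀ = Polynomial.aeval W P ∧
          (Polynomial.aeval W P).mulVec (fun _ => (1:ℝ)) = (fun _ => (1:ℝ))) ∧
      (N:ℝ)⁻¹ • (onesMat N * A R) = (N:ℝ)⁻¹ • (onesMat N * A 0) ∧
      frobNorm (A R - (N:ℝ)⁻¹ • (onesMat N * A 0))
        ≤ 2 * (1 - Real.sqrt (1-ρ))^R * frobNorm (A 0 - (N:ℝ)⁻¹ • (onesMat N * A 0)) := by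
  intro R _
  have hWe : W *ᵥ (fun _ => (1 : ℝ)) = fun _ => 1 := by
    have h := (hWnull _).2 ⟨1, rfl⟩
    rwa [Matrix.sub_mulVec, Matrix.one_mulVec, sub_eq_zero, eq_comm] at h
  have hWJ := mul_avgMat_of_mulVec_one hWe
  have hJW := avgMat_mul_of_mulVec_one hWsym hWe
  have hAR := chebyshev_iterate_eq_aeval hρpos hρlt.le hμ0 hμ1 hμrec hA1 hArec R
  have hP1 := eval_one_normalizedChebyshev hρpos hρlt.le R
  have hM : (W - avgMat N).IsHermitian :=
    (Matrix.isHermitian_iff_isSymm.2 hWsym).sub (Matrix.isHermitian_iff_isSymm.2 transpose_avgMat)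
  have hu : √(1 - ρ) ≤ 1 := Real.sqrt_le_one.2 (by linarith)
  simp only [← avgMat_mul]
  refine ⟨⟨_, natDegree_normalizedChebyshev_le ρ R, hP1, hAR,
    by rw [Matrix.transpose_aeval, hWsym],
    by rw [Matrix.aeval_mulVec_eq_eval_smul (hWe.trans (one_smul ℝ _).symm), hP1, one_smul]⟩,
    ?_, ?_⟩
  · rw [hAR, ← Matrix.mul_assoc, mul_aeval_eq_eval_smul (hJW.trans (one_smul ℝ _).symm), hP1,
      one_smul]
  · rw [hAR, aeval_mul_sub_avgMat_mul hWJ hJW hP1]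
    exact frobNorm_aeval_mul_le hM (mul_nonneg zero_le_two (pow_nonneg (sub_nonneg.2 hu) R))
      (fun i => abs_eval_normalizedChebyshev_le hρpos hρlt.le
        (hρdef ▸ abs_eigenvalues_le_specNorm hM i) R) _

/-- Chebyshev acceleration.
`μ` and `A` follow the Chebyshev recursions (the recursion for `A` is stated for
`r ≥ 1` in the shifted form `r ↦ r+1`).  For every `R ≥ 1`:
(a) `A^R = P(W) A⁰` for a real polynomial `P` of degree at most `R` with `P(1) = 1`;
in particular `P(W)` is symmetric and `P(W) e = e`;
(b) the row average is preserved: `(1/N) e eᵀ A^R = (1/N) e eᵀ A⁰ = Ā`; and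
(c) `‖A^R − Ā‖_F ≤ 2 (1 − √(1−ρ))^R ‖A⁰ − Ā‖_F`. -/
theorem chebyshev_acceleration (N p : ℕ) (hN : 0 < N) (hp : 0 < p)
    -- mixing matrix assumptions
    (W : Matrix (Fin N) (Fin N) ℝ) (hWsym : Wᵀ = W)
    (hWub : Matrix.PosSemidef (1 - W)) (hWlb : Matrix.PosDef (1 + W))
    (hWnull : ∀ v : Fin N → ℝ, (1 - W).mulVec v = 0 ↔ ∃ c : ℝ, v = fun _ => c)
    (ρ : ℝ) (hρdef : ρ = specNorm (W - (N:ℝ)⁻¹ • onesMat N)) (hρlt : ρ < 1)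
    (hρpos : 0 < ρ)
    -- Chebyshev step-size recursion
    (μ : ℕ → ℝ) (hμ0 : μ 0 = 1) (hμ1 : μ 1 = 1/ρ)
    (hμrec : ∀ r : ℕ, μ (r+2) = (2/ρ) * μ (r+1) - μ r)
    -- Chebyshev iterates
    (A : ℕ → Matrix (Fin N) (Fin p) ℝ)
    (hA1 : A 1 = W * A 0)
    (hArec : ∀ r : ℕ, A (r+2)
        = (2 * μ (r+1) / (ρ * μ (r+2))) • (W * A (r+1)) - (μ r / μ (r+2)) • A r) :
    ∀ R : ℕ, 1 ≤ R →
      (∃ P : Polynomial ℝ, P.natDegree ≤ R ∧ P.eval (1:ℝ) = 1 ∧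
          A R = (Polynomial.aeval W P) * A 0 ∧
          (Polynomial.aeval W P)ᵀ = Polynomial.aeval W P ∧
          (Polynomial.aeval W P).mulVec (fun _ => (1:ℝ)) = (fun _ => (1:ℝ))) ∧
      (N:ℝ)⁻¹ • (onesMat N * A R) = (N:ℝ)⁻¹ • (onesMat N * A 0) ∧
      frobNorm (A R - (N:ℝ)⁻¹ • (onesMat N * A 0))
        ≤ 2 * (1 - Real.sqrt (1-ρ))^R * frobNorm (A 0 - (N:ℝ)⁻¹ • (onesMat N * A 0)) :=
  chebyshev_acceleration_general N p W hWsym hWnull ρ hρdef hρlt hρpos μ hμ0 hμ1 hμrec A hA1 hArec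
end
end

section
/- For ADAPD iterates, for every k ≥ 1 one has √(I−W) Z^k = Y^k − (1/η) W (X0^k − X0^{k-1}) and Y^k = R^k − ∇F(X^k) − (1/η)(X0^k − X0^{k-1}), where R^k := ∇F(X^k) + Y^{k-1} + (1/η)(X^k − X0^{k-1}). -/
open Matrix Finset

attribute [local instance] Matrix.frobeniusNormedAddCommGroup Matrix.frobeniusNormedSpace

noncomputable section

variable {N p : ℕ}

/-- Multiplying the `Z`-update by `√(I−W)` produces `(I−W) X0^{k+1}`, and the `X0`-update
expresses `√(I−W) Z^k` through `Y^k` and the primal iterates. -/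
theorem mul_dual_eq_of_adapd_step {𝕜 n m : Type*} [Field 𝕜] [NeZero (2 : 𝕜)] [Fintype n]
    [DecidableEq n] {W S : Matrix n n 𝕜} (hS : S * S = 1 - W) {η : 𝕜} (hη : η ≠ 0)
    {x x0 x0' y y' z z' : Matrix n m 𝕜}
    (hx0 : x0' = (2 : 𝕜)⁻¹ • (W * x0 + x + η • (y - S * z)))
    (hy : y' = y + η⁻¹ • (x - x0')) (hz : z' = z + η⁻¹ • (S * x0')) :
    S * z' = y' - η⁻¹ • (W * (x0' - x0)) := by
  have hSz : S * z = y - η⁻¹ • ((2 : 𝕜) • x0' - W * x0 - x) := by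
    rw [eq_sub_iff_add_eq, ← eq_sub_iff_add_eq', inv_smul_eq_iff₀ hη, hx0, smul_smul,
      mul_inv_cancel₀ two_ne_zero, one_smul]
    abel
  rw [hz, Matrix.mul_add, Matrix.mul_smul, ← Matrix.mul_assoc, hS, hSz, hy]
  simp only [Matrix.sub_mul, Matrix.one_mul, Matrix.mul_sub]
  module

theorem adapd_dual_variable_relation_general (N p : ℕ)
    -- mixing matrix assumptions
    (W : Matrix (Fin N) (Fin N) ℝ)
    -- `S` is the unique positive semidefinite square root of `I − W`
    (S : Matrix (Fin N) (Fin N) ℝ) (hSsq : S * S = 1 - W)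
    -- objective: `F` is `L`-smooth (gradient `G` w.r.t. the Frobenius inner product)
    -- and bounded below by `flb`
    (G : Matrix (Fin N) (Fin p) ℝ → Matrix (Fin N) (Fin p) ℝ)
    -- ADAPD iterates with parameter `η` and error tolerances `ε`
    (η : ℝ) (hη : 0 < η)
    (X X0 Y Z : ℕ → Matrix (Fin N) (Fin p) ℝ)
    (hX0it : ∀ k, X0 (k+1) = (2:ℝ)⁻¹ • (W * X0 k + X (k+1) + η • (Y k - S * Z k)))
    (hYit : ∀ k, Y (k+1) = Y k + η⁻¹ • (X (k+1) - X0 (k+1)))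
    (hZit : ∀ k, Z (k+1) = Z k + η⁻¹ • (S * X0 (k+1)))
    :
    ∀ k : ℕ,
      S * Z (k+1) = Y (k+1) - η⁻¹ • (W * (X0 (k+1) - X0 k)) ∧
      Y (k+1) = (G (X (k+1)) + Y k + η⁻¹ • (X (k+1) - X0 k)) - G (X (k+1))
          - η⁻¹ • (X0 (k+1) - X0 k) := by
  intro k
  refine ⟨mul_dual_eq_of_adapd_step hSsq hη.ne' (hX0it k) (hYit k) (hZit k), ?_⟩
  rw [hYit k]
  module

/-- Lemma: dual variable relations for ADAPD.
For every `k ≥ 1` (written with the shift `k ↦ k+1`):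
`√(I−W) Z^{k+1} = Y^{k+1} − (1/η) W (X0^{k+1} − X0^k)` and
`Y^{k+1} = R^{k+1} − ∇F(X^{k+1}) − (1/η)(X0^{k+1} − X0^k)`,
where `R^{k+1} = ∇F(X^{k+1}) + Y^k + (1/η)(X^{k+1} − X0^k)`. -/
theorem adapd_dual_variable_relation (N p : ℕ) (hN : 0 < N) (hp : 0 < p)
    -- mixing matrix assumptions
    (W : Matrix (Fin N) (Fin N) ℝ) (hWsym : Wᵀ = W)
    (hWub : Matrix.PosSemidef (1 - W)) (hWlb : Matrix.PosDef (1 + W))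
    (hWnull : ∀ v : Fin N → ℝ, (1 - W).mulVec v = 0 ↔ ∃ c : ℝ, v = fun _ => c)
    (ρ : ℝ) (hρdef : ρ = specNorm (W - (N:ℝ)⁻¹ • onesMat N)) (hρlt : ρ < 1)
    -- `S` is the unique positive semidefinite square root of `I − W`
    (S : Matrix (Fin N) (Fin N) ℝ) (hSpsd : S.PosSemidef) (hSsq : S * S = 1 - W)
    -- objective: `F` is `L`-smooth (gradient `G` w.r.t. the Frobenius inner product)
    -- and bounded below by `flb`
    (L flb : ℝ) (hL : 0 < L)
    (F : Matrix (Fin N) (Fin p) ℝ → ℝ)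
    (G : Matrix (Fin N) (Fin p) ℝ → Matrix (Fin N) (Fin p) ℝ)
    (hgrad : ∀ U, HasFDerivAt F (frobCLM (G U)) U)
    (hLip : ∀ U V, frobNorm (G U - G V) ≤ L * frobNorm (U - V))
    (hlb : ∀ U, flb ≤ F U)
    -- ADAPD iterates with parameter `η` and error tolerances `ε`
    (η : ℝ) (hη : 0 < η)
    (ε : ℕ → ℝ) (hεpos : ∀ k, 0 < ε (k+1)) (hεmono : ∀ k, ε (k+2) ≤ ε (k+1))
    (X X0 Y Z : ℕ → Matrix (Fin N) (Fin p) ℝ)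
    (hZ0 : ∃ U0 : Matrix (Fin N) (Fin p) ℝ, Z 0 = S * U0)
    (hres : ∀ k, frobSq (G (X (k+1)) + Y k + η⁻¹ • (X (k+1) - X0 k)) ≤ ε (k+1))
    (hX0it : ∀ k, X0 (k+1) = (2:ℝ)⁻¹ • (W * X0 k + X (k+1) + η • (Y k - S * Z k)))
    (hYit : ∀ k, Y (k+1) = Y k + η⁻¹ • (X (k+1) - X0 (k+1)))
    (hZit : ∀ k, Z (k+1) = Z k + η⁻¹ • (S * X0 (k+1)))
    :
    ∀ k : ℕ,
      S * Z (k+1) = Y (k+1) - η⁻¹ • (W * (X0 (k+1) - X0 k)) ∧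
      Y (k+1) = (G (X (k+1)) + Y k + η⁻¹ • (X (k+1) - X0 k)) - G (X (k+1))
          - η⁻¹ • (X0 (k+1) - X0 k) :=
  adapd_dual_variable_relation_general N p W S hSsq G η hη X X0 Y Z hX0it hYit hZit

end
end

section
/- For ADAPD iterates with initialization consistency, if η < 1/(2L), then for all k ≥ 0: η‖Y^{k+1}−Y^k‖_F² ≤ 4L²η‖X^{k+1}−X^k‖_F² + (4/η)‖V0^k‖_F² + 8η ε_k, and η(1−ρ)‖Z^{k+1}−Z^k‖_F² ≤ 8L²η‖X^{k+1}−X^k‖_F² + (10/η)‖V0^k‖_F² + 16η ε_k. -/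
/-!
The inexact primal step gives `Y^k = R^k - ∇F(X^k) - η⁻¹ (X0^k - X0^{k-1})` with `‖R^k‖² ≤ ε_k`,
so `Y^{k+1} - Y^k` is a sum of four terms, bounded by `‖a+b+c+d‖² ≤ 4(‖a‖²+‖b‖²+‖c‖²+‖d‖²)`
and the Lipschitz gradient. Eliminating `X^{k+1}` from the `X0`-update gives
`√(I-W) Z^k = Y^k - η⁻¹ W (X0^k - X0^{k-1})`. The increment `Z^{k+1} - Z^k` lies in the range of
`√(I-W)`, hence is orthogonal to consensus, where `‖√(I-W) U‖² ≥ (1-ρ)‖U‖²`; with `‖W‖ ≤ 1` this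
bounds it by the `Y`-increment and `V0^k`.
-/

open Matrix Finset

attribute [local instance] Matrix.frobeniusNormedAddCommGroup Matrix.frobeniusNormedSpace

noncomputable section

variable {N p : ℕ}

def frobEmb : Matrix (Fin N) (Fin p) ℝ →ₗ[ℝ] EuclideanSpace ℝ (Fin N × Fin p) where
  toFun A := WithLp.toLp 2 fun q => A q.1 q.2
  map_add' _ _ := rfl
  map_smul' _ _ := rfl

lemma frobEmb_apply (A : Matrix (Fin N) (Fin p) ℝ) (q : Fin N × Fin p) :
    frobEmb A q = A q.1 q.2 :=
  rfl

lemma frobInner_eq_inner (A B : Matrix (Fin N) (Fin p) ℝ) :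
    frobInner A B = inner ℝ (frobEmb A) (frobEmb B) := by
  simp [frobInner, frobEmb_apply, PiLp.inner_apply, Fintype.sum_prod_type, mul_comm]

lemma frobSq_eq_norm_sq (A : Matrix (Fin N) (Fin p) ℝ) : frobSq A = ‖frobEmb A‖ ^ 2 := by
  rw [frobSq, frobInner_eq_inner, real_inner_self_eq_norm_sq]

lemma frobSq_eq_zero_iff {A : Matrix (Fin N) (Fin p) ℝ} : frobSq A = 0 ↔ A = 0 := by
  rw [frobSq_eq_norm_sq, sq_eq_zero_iff, norm_eq_zero]
  refine ⟨fun h => ?_, fun h => by rw [h, map_zero]⟩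
  ext i j
  simpa [frobEmb_apply] using congrArg (fun v : EuclideanSpace ℝ (Fin N × Fin p) => v (i, j)) h

lemma frobNorm_eq_norm (A : Matrix (Fin N) (Fin p) ℝ) : frobNorm A = ‖frobEmb A‖ := by
  rw [frobNorm, ← frobSq, frobSq_eq_norm_sq, Real.sqrt_sq (norm_nonneg _)]

lemma frobSq_eq_frobNorm_sq (A : Matrix (Fin N) (Fin p) ℝ) : frobSq A = frobNorm A ^ 2 := by
  rw [frobSq_eq_norm_sq, frobNorm_eq_norm]

lemma frobNorm_nonneg (A : Matrix (Fin N) (Fin p) ℝ) : 0 ≤ frobNorm A :=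
  Real.sqrt_nonneg _

lemma frobSq_nonneg (A : Matrix (Fin N) (Fin p) ℝ) : 0 ≤ frobSq A := by
  rw [frobSq_eq_norm_sq]; positivity

lemma frobSq_smul (c : ℝ) (A : Matrix (Fin N) (Fin p) ℝ) : frobSq (c • A) = c ^ 2 * frobSq A := by
  rw [frobSq_eq_norm_sq, frobSq_eq_norm_sq, map_smul, norm_smul, mul_pow, Real.norm_eq_abs, sq_abs]

lemma frobInner_le_frobNorm_mul (A B : Matrix (Fin N) (Fin p) ℝ) :
    frobInner A B ≤ frobNorm A * frobNorm B := by
  rw [frobInner_eq_inner, frobNorm_eq_norm, frobNorm_eq_norm]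
  exact real_inner_le_norm _ _

lemma frobSq_add_of_frobInner_eq_zero {A B : Matrix (Fin N) (Fin p) ℝ} (h : frobInner A B = 0) :
    frobSq (A + B) = frobSq A + frobSq B := by
  rw [frobInner_eq_inner] at h
  rw [frobSq_eq_norm_sq, frobSq_eq_norm_sq, frobSq_eq_norm_sq, map_add, norm_add_sq_real, h]
  ring

lemma frobSq_add_le (A B : Matrix (Fin N) (Fin p) ℝ) :
    frobSq (A + B) ≤ 2 * (frobSq A + frobSq B) := by
  simp only [frobSq_eq_norm_sq, map_add]
  exact (pow_le_pow_left₀ (norm_nonneg _) (norm_add_le _ _) 2).trans add_sq_le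

lemma frobSq_sub_le (A B : Matrix (Fin N) (Fin p) ℝ) :
    frobSq (A - B) ≤ 2 * (frobSq A + frobSq B) := by
  simpa [sub_eq_add_neg, frobSq_eq_norm_sq] using frobSq_add_le A (-B)

lemma frobSq_sub_sub_sub_le (A B C D : Matrix (Fin N) (Fin p) ℝ) :
    frobSq (A - B - C - D) ≤ 4 * (frobSq A + frobSq B + frobSq C + frobSq D) := by
  have h := frobSq_sub_le (A - B) (C + D)
  rw [sub_add_eq_sub_sub] at h
  linarith [frobSq_sub_le A B, frobSq_add_le C D]

lemma frobInner_mul_left (M : Matrix (Fin N) (Fin N) ℝ) (A B : Matrix (Fin N) (Fin p) ℝ) :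
    frobInner (M * A) B = frobInner A (Mᵀ * B) := by
  have htrace : ∀ C D : Matrix (Fin N) (Fin p) ℝ, frobInner C D = (Cᵀ * D).trace := by
    intro C D
    simp only [frobInner, Matrix.trace, Matrix.diag, Matrix.mul_apply, Matrix.transpose_apply]
    exact Finset.sum_comm
  rw [htrace, htrace, Matrix.transpose_mul, Matrix.mul_assoc]

lemma frobInner_mul_mul_eq_zero {P M : Matrix (Fin N) (Fin N) ℝ} (hP : Pᵀ = P) (h : P * M = 0)
    (A B : Matrix (Fin N) (Fin p) ℝ) : frobInner (P * A) (M * B) = 0 := by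
  rw [frobInner_mul_left, hP, ← Matrix.mul_assoc, h, Matrix.zero_mul]
  simp [frobInner]

lemma frobSq_eq_sum_norm_col_sq (A : Matrix (Fin N) (Fin p) ℝ) :
    frobSq A = ∑ j, ‖WithLp.toLp 2 (Aᵀ j)‖ ^ 2 := by
  simp only [EuclideanSpace.norm_sq_eq, frobSq, frobInner, Real.norm_eq_abs, sq_abs,
    Matrix.transpose_apply]
  rw [Finset.sum_comm]
  simp [sq]

lemma frobSq_mul_le (M : Matrix (Fin N) (Fin N) ℝ) (A : Matrix (Fin N) (Fin p) ℝ) :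
    frobSq (M * A) ≤ specNorm M ^ 2 * frobSq A := by
  rw [frobSq_eq_sum_norm_col_sq, frobSq_eq_sum_norm_col_sq, Finset.mul_sum]
  refine Finset.sum_le_sum fun j _ => ?_
  have hcol : WithLp.toLp 2 ((M * A)ᵀ j)
      = Matrix.toEuclideanCLM (𝕜 := ℝ) M (WithLp.toLp 2 (Aᵀ j)) := by
    ext i; simp [Matrix.mul_apply, Matrix.mulVec, dotProduct]
  rw [hcol, specNorm, ← mul_pow]
  exact pow_le_pow_left₀ (norm_nonneg _) (ContinuousLinearMap.le_opNorm _ _) 2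

lemma frobNorm_mul_le (M : Matrix (Fin N) (Fin N) ℝ) (A : Matrix (Fin N) (Fin p) ℝ) :
    frobNorm (M * A) ≤ specNorm M * frobNorm A := by
  have h := frobSq_mul_le M A
  rw [frobSq_eq_frobNorm_sq, frobSq_eq_frobNorm_sq, ← mul_pow] at h
  exact le_of_sq_le_sq h (mul_nonneg (norm_nonneg _) (frobNorm_nonneg _))

def averaging (N : ℕ) : Matrix (Fin N) (Fin N) ℝ := (N : ℝ)⁻¹ • onesMat N

lemma averaging_transpose : (averaging N)ᵀ = averaging N := by
  ext i j; rfl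

lemma averaging_mul_self : averaging N * averaging N = averaging N := by
  rcases Nat.eq_zero_or_pos N with rfl | hN
  · exact Subsingleton.elim _ _
  · have hN' : (N : ℝ) ≠ 0 := by positivity
    ext i j
    simp only [averaging, Matrix.mul_apply, Matrix.smul_apply, onesMat, smul_eq_mul, mul_one,
      sum_const, card_univ, Fintype.card_fin, nsmul_eq_mul]
    field_simp

lemma mul_averaging_of_mulVec_one {W : Matrix (Fin N) (Fin N) ℝ}
    (hW : W *ᵥ (fun _ => 1) = fun _ => 1) : W * averaging N = averaging N := by
  ext i j
  have hi := congrFun hW i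
  simp only [Matrix.mulVec, dotProduct, mul_one] at hi
  simp [averaging, onesMat, Matrix.mul_apply, ← Finset.sum_mul, hi]

lemma averaging_mul_of_mul_averaging {W : Matrix (Fin N) (Fin N) ℝ} (hW : Wᵀ = W)
    (h : W * averaging N = averaging N) : averaging N * W = averaging N := by
  simpa [Matrix.transpose_mul, hW, averaging_transpose] using congrArg Matrix.transpose h

lemma mul_eq_zero_of_mul_mul_self_eq_zero {S : Matrix (Fin N) (Fin N) ℝ} (hS : Sᵀ = S)
    {A : Matrix (Fin N) (Fin p) ℝ} (h : S * (S * A) = 0) : S * A = 0 := by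
  rw [← frobSq_eq_zero_iff, frobSq, frobInner_mul_left, hS, h]
  simp [frobInner]

lemma frobSq_mul_le_of_specNorm_sub_averaging_le_one {W : Matrix (Fin N) (Fin N) ℝ}
    (hW : Wᵀ = W) (hWP : W * averaging N = averaging N) (hρ : specNorm (W - averaging N) ≤ 1)
    (A : Matrix (Fin N) (Fin p) ℝ) : frobSq (W * A) ≤ frobSq A := by
  set P := averaging N
  have hPW : P * W = P := averaging_mul_of_mul_averaging hW hWP
  have hPP : P * P = P := averaging_mul_self
  have hsplitA : frobSq A = frobSq (P * A) + frobSq ((1 - P) * A) := by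
    rw [← frobSq_add_of_frobInner_eq_zero (frobInner_mul_mul_eq_zero averaging_transpose
      (by rw [Matrix.mul_sub, hPP, Matrix.mul_one, sub_self]) _ _), ← Matrix.add_mul,
      add_sub_cancel, Matrix.one_mul]
  have hfactor : (W - P) * (1 - P) = W - P := by
    rw [Matrix.mul_sub, Matrix.mul_one, Matrix.sub_mul, hWP, hPP, sub_self, sub_zero]
  have hsplitWA : frobSq (W * A) = frobSq (P * A) + frobSq ((W - P) * ((1 - P) * A)) := by
    rw [← frobSq_add_of_frobInner_eq_zero (frobInner_mul_mul_eq_zero averaging_transpose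
      (by rw [Matrix.mul_sub, hPW, hPP, sub_self]) _ _), ← Matrix.mul_assoc, hfactor,
      ← Matrix.add_mul, add_sub_cancel]
  have hρA := (frobSq_mul_le (W - P) ((1 - P) * A)).trans
    (mul_le_of_le_one_left (frobSq_nonneg _) (pow_le_one₀ (norm_nonneg _) hρ))
  linarith

lemma one_sub_specNorm_mul_frobSq_le {W S : Matrix (Fin N) (Fin N) ℝ} (hS : Sᵀ = S)
    (hSsq : S * S = 1 - W) {U : Matrix (Fin N) (Fin p) ℝ} (hU : averaging N * U = 0) :
    (1 - specNorm (W - averaging N)) * frobSq U ≤ frobSq (S * U) := by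
  have hSU : frobSq (S * U) = frobSq U - frobInner U ((W - averaging N) * U) := by
    rw [frobSq, frobInner_mul_left, hS, ← Matrix.mul_assoc, hSsq, Matrix.sub_mul, Matrix.sub_mul,
      hU, sub_zero, Matrix.one_mul]
    simp [frobSq, frobInner, Matrix.sub_apply, mul_sub, Finset.sum_sub_distrib]
  have hWU : frobInner U ((W - averaging N) * U) ≤ specNorm (W - averaging N) * frobSq U :=
    calc frobInner U ((W - averaging N) * U)
        ≤ frobNorm U * (specNorm (W - averaging N) * frobNorm U) :=
          (frobInner_le_frobNorm_mul _ _).trans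
            (mul_le_mul_of_nonneg_left (frobNorm_mul_le _ _) (frobNorm_nonneg U))
      _ = specNorm (W - averaging N) * frobSq U := by rw [frobSq_eq_frobNorm_sq]; ring
  linarith

lemma averaging_mul_eq_zero {W S : Matrix (Fin N) (Fin N) ℝ} (hS : Sᵀ = S)
    (hSsq : S * S = 1 - W) (hWP : W * averaging N = averaging N) : averaging N * S = 0 := by
  have h : S * averaging N = 0 := mul_eq_zero_of_mul_mul_self_eq_zero hS <| by
    rw [← Matrix.mul_assoc, hSsq, Matrix.sub_mul, Matrix.one_mul, hWP, sub_self]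
  simpa [Matrix.transpose_mul, hS, averaging_transpose] using congrArg Matrix.transpose h

lemma frobSq_sub_le_of_lipschitz {G : Matrix (Fin N) (Fin p) ℝ → Matrix (Fin N) (Fin p) ℝ}
    {L : ℝ} (hLip : ∀ U V, frobNorm (G U - G V) ≤ L * frobNorm (U - V))
    (U V : Matrix (Fin N) (Fin p) ℝ) : frobSq (G U - G V) ≤ L ^ 2 * frobSq (U - V) := by
  rw [frobSq_eq_frobNorm_sq, frobSq_eq_frobNorm_sq, ← mul_pow]
  exact pow_le_pow_left₀ (frobNorm_nonneg _) (hLip U V) 2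

lemma mul_frobSq_le_of_eq_sub_sub_sub
    {G : Matrix (Fin N) (Fin p) ℝ → Matrix (Fin N) (Fin p) ℝ} {L η e : ℝ}
    (hLip : ∀ U V, frobNorm (G U - G V) ≤ L * frobNorm (U - V)) (hη : 0 < η)
    {D R R' U U' V : Matrix (Fin N) (Fin p) ℝ} (hD : D = R' - R - (G U' - G U) - η⁻¹ • V)
    (hR' : frobSq R' ≤ e) (hR : frobSq R ≤ e) :
    η * frobSq D ≤ 4 * L ^ 2 * η * frobSq (U' - U) + 4 / η * frobSq V + 8 * η * e := by
  have hD4 := frobSq_sub_sub_sub_le R' R (G U' - G U) (η⁻¹ • V)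
  rw [← hD, frobSq_smul] at hD4
  have hG := frobSq_sub_le_of_lipschitz hLip U' U
  calc η * frobSq D ≤ η * (4 * (e + e + L ^ 2 * frobSq (U' - U) + η⁻¹ ^ 2 * frobSq V)) := by
        gcongr; linarith
    _ = 4 * L ^ 2 * η * frobSq (U' - U) + 4 / η * frobSq V + 8 * η * e := by
        field_simp; ring

lemma mul_one_sub_specNorm_mul_frobSq_le {W S : Matrix (Fin N) (Fin N) ℝ}
    (hW : Wᵀ = W) (hS : Sᵀ = S) (hSsq : S * S = 1 - W) (hWP : W * averaging N = averaging N)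
    (hρ : specNorm (W - averaging N) ≤ 1) {η : ℝ} (hη : 0 < η) {D E V : Matrix (Fin N) (Fin p) ℝ}
    (hPD : averaging N * D = 0) (hSD : S * D = E - η⁻¹ • (W * V)) :
    η * (1 - specNorm (W - averaging N)) * frobSq D ≤ 2 * (η * frobSq E) + 2 / η * frobSq V := by
  have hSD2 := frobSq_sub_le E (η⁻¹ • (W * V))
  rw [← hSD, frobSq_smul] at hSD2
  have hWV := mul_le_mul_of_nonneg_left
    (frobSq_mul_le_of_specNorm_sub_averaging_le_one hW hWP hρ V) (sq_nonneg η⁻¹)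
  calc η * (1 - specNorm (W - averaging N)) * frobSq D
      ≤ η * (2 * (frobSq E + η⁻¹ ^ 2 * frobSq V)) := by
        rw [mul_assoc]
        exact mul_le_mul_of_nonneg_left
          (by linarith [one_sub_specNorm_mul_frobSq_le hS hSsq hPD]) hη.le
    _ = 2 * (η * frobSq E) + 2 / η * frobSq V := by
        field_simp

section ADAPD

def adapdResidual (G : Matrix (Fin N) (Fin p) ℝ → Matrix (Fin N) (Fin p) ℝ) (η : ℝ)
    (X X0 Y : ℕ → Matrix (Fin N) (Fin p) ℝ) (R0 : Matrix (Fin N) (Fin p) ℝ) :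
    ℕ → Matrix (Fin N) (Fin p) ℝ
  | 0 => R0
  | k + 1 => G (X (k + 1)) + Y k + η⁻¹ • (X (k + 1) - X0 k)

variable {G : Matrix (Fin N) (Fin p) ℝ → Matrix (Fin N) (Fin p) ℝ} {η : ℝ}
  {X X0 Y Z : ℕ → Matrix (Fin N) (Fin p) ℝ}

lemma eq_adapdResidual_sub {R0 : Matrix (Fin N) (Fin p) ℝ} (hY0 : Y 0 = R0 - G (X 0))
    (hYit : ∀ k, Y (k + 1) = Y k + η⁻¹ • (X (k + 1) - X0 (k + 1))) (n : ℕ) :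
    Y n = adapdResidual G η X X0 Y R0 n - G (X n) - η⁻¹ • (X0 n - X0 (n - 1)) := by
  cases n with
  | zero => simp [adapdResidual, hY0]
  | succ k => rw [hYit k, adapdResidual, Nat.add_sub_cancel]; module

lemma mul_Z_eq_sub {W S : Matrix (Fin N) (Fin N) ℝ} (hη : η ≠ 0) (hSsq : S * S = 1 - W)
    (hX0it : ∀ k, X0 (k + 1) = (2 : ℝ)⁻¹ • (W * X0 k + X (k + 1) + η • (Y k - S * Z k)))
    (hYit : ∀ k, Y (k + 1) = Y k + η⁻¹ • (X (k + 1) - X0 (k + 1)))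
    (hZit : ∀ k, Z (k + 1) = Z k + η⁻¹ • (S * X0 (k + 1))) (hZY0 : S * Z 0 = Y 0) (n : ℕ) :
    S * Z n = Y n - η⁻¹ • (W * (X0 n - X0 (n - 1))) := by
  cases n with
  | zero => simpa using hZY0
  | succ m =>
    have hstep : X (m + 1) - X0 (m + 1) = η • (Y (m + 1) - Y m) := by
      rw [hYit m, add_sub_cancel_left, smul_inv_smul₀ hη]
    have hSZ : S * Z m = Y (m + 1) + η⁻¹ • (W * X0 m - X0 (m + 1)) := by
      refine smul_right_injective _ hη ?_
      dsimp only
      rw [smul_add, smul_inv_smul₀ hη]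
      linear_combination (norm := module) (2 : ℝ) • hX0it m + hstep
    rw [hZit m, Matrix.mul_add, Matrix.mul_smul, ← Matrix.mul_assoc, hSsq, Matrix.sub_mul,
      Matrix.one_mul, hSZ, Nat.add_sub_cancel, Matrix.mul_sub]
    module

end ADAPD

/-- `k - 1` is truncated subtraction, which realizes the convention `X0^{-1} = X0^0`. -/
theorem adapd_dual_var_bound_general (N p : ℕ)
    -- mixing matrix assumptions
    (W : Matrix (Fin N) (Fin N) ℝ) (hWsym : Wᵀ = W)
    (hWnull : ∀ v : Fin N → ℝ, (1 - W).mulVec v = 0 ↔ ∃ c : ℝ, v = fun _ => c)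
    (ρ : ℝ) (hρdef : ρ = specNorm (W - (N:ℝ)⁻¹ • onesMat N)) (hρlt : ρ < 1)
    -- `S` is the unique positive semidefinite square root of `I − W`
    (S : Matrix (Fin N) (Fin N) ℝ) (hSpsd : S.PosSemidef) (hSsq : S * S = 1 - W)
    -- objective: `F` is `L`-smooth (gradient `G` w.r.t. the Frobenius inner product)
    (L : ℝ)
    (G : Matrix (Fin N) (Fin p) ℝ → Matrix (Fin N) (Fin p) ℝ)
    (hLip : ∀ U V, frobNorm (G U - G V) ≤ L * frobNorm (U - V))
    -- ADAPD iterates with parameter `η` and error tolerances `ε`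
    (η : ℝ) (hη : 0 < η)
    (ε : ℕ → ℝ) (hεmono : ∀ k, ε (k+2) ≤ ε (k+1))
    (X X0 Y Z : ℕ → Matrix (Fin N) (Fin p) ℝ)
    (hres : ∀ k, frobSq (G (X (k+1)) + Y k + η⁻¹ • (X (k+1) - X0 k)) ≤ ε (k+1))
    (hX0it : ∀ k, X0 (k+1) = (2:ℝ)⁻¹ • (W * X0 k + X (k+1) + η • (Y k - S * Z k)))
    (hYit : ∀ k, Y (k+1) = Y k + η⁻¹ • (X (k+1) - X0 (k+1)))
    (hZit : ∀ k, Z (k+1) = Z k + η⁻¹ • (S * X0 (k+1)))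
    -- initialization consistency (with `ε 0 := ε 1`)
    (hε0 : ε 0 = ε 1)
    (hZY0 : S * Z 0 = Y 0)
    (hY0R : ∃ R0 : Matrix (Fin N) (Fin p) ℝ, Y 0 = R0 - G (X 0) ∧ frobSq R0 ≤ ε 0) :
    ∀ k : ℕ,
      η * frobSq (Y (k+1) - Y k)
        ≤ 4*L^2*η * frobSq (X (k+1) - X k)
          + 4/η * frobSq ((X0 (k+1) - X0 k) - (X0 k - X0 (k-1)))
          + 8*η * ε k ∧
      η*(1-ρ) * frobSq (Z (k+1) - Z k)
        ≤ 8*L^2*η * frobSq (X (k+1) - X k)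
          + 10/η * frobSq ((X0 (k+1) - X0 k) - (X0 k - X0 (k-1)))
          + 16*η * ε k := by
  intro k
  obtain ⟨R0, hY0, hR0⟩ := hY0R
  set R := adapdResidual G η X X0 Y R0
  have hεanti : ∀ n, ε (n + 1) ≤ ε n := by rintro (_ | n); exacts [hε0.ge, hεmono n]
  have hR : ∀ n, frobSq (R n) ≤ ε n := by rintro (_ | n); exacts [hR0, hres n]
  have hS : Sᵀ = S := (Matrix.isHermitian_iff_isSymm.mp hSpsd.1).eq
  have hWP : W * averaging N = averaging N := mul_averaging_of_mulVec_one <| by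
    have h1 := (hWnull _).mpr ⟨1, rfl⟩
    rwa [Matrix.sub_mulVec, Matrix.one_mulVec, sub_eq_zero, eq_comm] at h1
  have hdY : Y (k+1) - Y k = R (k+1) - R k - (G (X (k+1)) - G (X k))
      - η⁻¹ • ((X0 (k+1) - X0 k) - (X0 k - X0 (k-1))) := by
    rw [eq_adapdResidual_sub hY0 hYit (k+1), eq_adapdResidual_sub hY0 hYit k, Nat.add_sub_cancel]
    module
  have hY := mul_frobSq_le_of_eq_sub_sub_sub hLip hη hdY ((hR _).trans (hεanti k)) (hR k)
  have hdZ : S * (Z (k+1) - Z k)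
      = Y (k+1) - Y k - η⁻¹ • (W * ((X0 (k+1) - X0 k) - (X0 k - X0 (k-1)))) := by
    rw [Matrix.mul_sub, mul_Z_eq_sub hη.ne' hSsq hX0it hYit hZit hZY0,
      mul_Z_eq_sub hη.ne' hSsq hX0it hYit hZit hZY0, Nat.add_sub_cancel, Matrix.mul_sub W (_ - _)]
    module
  have hPdZ : averaging N * (Z (k+1) - Z k) = 0 := by
    rw [hZit k, add_sub_cancel_left, Matrix.mul_smul, ← Matrix.mul_assoc,
      averaging_mul_eq_zero hS hSsq hWP, Matrix.zero_mul, smul_zero]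
  have hρ : ρ = specNorm (W - averaging N) := hρdef
  have hZ := mul_one_sub_specNorm_mul_frobSq_le hWsym hS hSsq hWP (hρ ▸ hρlt.le) hη hPdZ hdZ
  rw [← hρ] at hZ
  exact ⟨hY, by linear_combination hZ + 2 * hY⟩

/-- Lemma: dual variable change bounded by primal change.
Here `V0^k = (X0^{k+1} − X0^k) − (X0^k − X0^{k-1})`, with the convention
`X0^{-1} = X0^0` (realized by truncated subtraction `k - 1` on `ℕ`). -/
theorem adapd_dual_var_bound (N p : ℕ) (hN : 0 < N) (hp : 0 < p)
    -- mixing matrix assumptions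
    (W : Matrix (Fin N) (Fin N) ℝ) (hWsym : Wᵀ = W)
    (hWub : Matrix.PosSemidef (1 - W)) (hWlb : Matrix.PosDef (1 + W))
    (hWnull : ∀ v : Fin N → ℝ, (1 - W).mulVec v = 0 ↔ ∃ c : ℝ, v = fun _ => c)
    (ρ : ℝ) (hρdef : ρ = specNorm (W - (N:ℝ)⁻¹ • onesMat N)) (hρlt : ρ < 1)
    -- `S` is the unique positive semidefinite square root of `I − W`
    (S : Matrix (Fin N) (Fin N) ℝ) (hSpsd : S.PosSemidef) (hSsq : S * S = 1 - W)
    -- objective: `F` is `L`-smooth (gradient `G` w.r.t. the Frobenius inner product)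
    -- and bounded below by `flb`
    (L flb : ℝ) (hL : 0 < L)
    (F : Matrix (Fin N) (Fin p) ℝ → ℝ)
    (G : Matrix (Fin N) (Fin p) ℝ → Matrix (Fin N) (Fin p) ℝ)
    (hgrad : ∀ U, HasFDerivAt F (frobCLM (G U)) U)
    (hLip : ∀ U V, frobNorm (G U - G V) ≤ L * frobNorm (U - V))
    (hlb : ∀ U, flb ≤ F U)
    -- ADAPD iterates with parameter `η` and error tolerances `ε`
    (η : ℝ) (hη : 0 < η)
    (ε : ℕ → ℝ) (hεpos : ∀ k, 0 < ε (k+1)) (hεmono : ∀ k, ε (k+2) ≤ ε (k+1))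
    (X X0 Y Z : ℕ → Matrix (Fin N) (Fin p) ℝ)
    (hZ0 : ∃ U0 : Matrix (Fin N) (Fin p) ℝ, Z 0 = S * U0)
    (hres : ∀ k, frobSq (G (X (k+1)) + Y k + η⁻¹ • (X (k+1) - X0 k)) ≤ ε (k+1))
    (hX0it : ∀ k, X0 (k+1) = (2:ℝ)⁻¹ • (W * X0 k + X (k+1) + η • (Y k - S * Z k)))
    (hYit : ∀ k, Y (k+1) = Y k + η⁻¹ • (X (k+1) - X0 (k+1)))
    (hZit : ∀ k, Z (k+1) = Z k + η⁻¹ • (S * X0 (k+1)))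
    -- initialization consistency (with `ε 0 := ε 1`)
    (hε0 : ε 0 = ε 1)
    (hZY0 : S * Z 0 = Y 0)
    (hY0R : ∃ R0 : Matrix (Fin N) (Fin p) ℝ, Y 0 = R0 - G (X 0) ∧ frobSq R0 ≤ ε 0)
    (hη2 : η < 1/(2*L)) :
    ∀ k : ℕ,
      η * frobSq (Y (k+1) - Y k)
        ≤ 4*L^2*η * frobSq (X (k+1) - X k)
          + 4/η * frobSq ((X0 (k+1) - X0 k) - (X0 k - X0 (k-1)))
          + 8*η * ε k ∧
      η*(1-ρ) * frobSq (Z (k+1) - Z k)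
        ≤ 8*L^2*η * frobSq (X (k+1) - X k)
          + 10/η * frobSq ((X0 (k+1) - X0 k) - (X0 k - X0 (k-1)))
          + 16*η * ε k :=
  adapd_dual_var_bound_general N p W hWsym hWnull ρ hρdef hρlt S hSpsd hSsq L G hLip η hη ε hεmono X
    X0 Y Z hres hX0it hYit hZit hε0 hZY0 hY0R

end
end
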